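/- For all integers k ≥ 1 and a ≥ 1, in K[B] one has B_ev^{(2k−1)} · B_ev^{(2a)} = [2k+2a−1 choose 2k−1] · ( B_ev^{(2k+2a−1)} + Σ_{ℓ=1}^{k} ( ∏_{m=1}^{ℓ} [2a−2m+2]·[2k−2m+2] / ( [2k+2a−2m+1]·[2m] ) ) · (qς)^{ℓ} · B_ev^{(2k+2a−2ℓ−1)} ). -/

import Mathlib

noncomputable section

open Polynomial Finset

abbrev Kq : Type := RatFunc ℚ

/-- The variable `q` in `ℚ(q)`. -/
def qq : Kq := RatFunc.X

/-- The quantum integer `[n] = (q^n - q^{-n})/(q - q^{-1})` for `n : ℤ`. -/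
def qint (n : ℤ) : Kq := (qq ^ n - qq ^ (-n)) / (qq - qq⁻¹)

/-- The quantum factorial `[n]! = ∏_{i=1}^n [i]`. -/
def qfact (n : ℕ) : Kq := ∏ i ∈ Finset.range n, qint ((i : ℤ) + 1)

/-- The quantum binomial `[n choose m] = [n]!/([m]!·[n-m]!)`. -/
def qbinom (n m : ℕ) : Kq := qfact n / (qfact m * qfact (n - m))

/-- The even ı-divided power `B_ev^{(n)}` in `K[B]`. -/
def BevP (ς : Kq) (n : ℕ) : Polynomial Kq :=
  if Even n then
    Polynomial.C (qfact n)⁻¹ *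
      ∏ j ∈ Finset.range (n / 2),
        ((Polynomial.X : Polynomial Kq) ^ 2 - Polynomial.C (qq * ς * (qint (2 * (j : ℤ))) ^ 2))
  else
    Polynomial.C (qfact n)⁻¹ *
      (Polynomial.X *
        ∏ j ∈ Finset.range (n / 2),
          ((Polynomial.X : Polynomial Kq) ^ 2 - Polynomial.C (qq * ς * (qint (2 * (j : ℤ) + 2)) ^ 2)))

/-- The odd ı-divided power `B_odd^{(n)}` in `K[B]`. -/
def BoddP (ς : Kq) (n : ℕ) : Polynomial Kq :=
  if Even n then
    Polynomial.C (qfact n)⁻¹ *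
      ∏ j ∈ Finset.range (n / 2),
        ((Polynomial.X : Polynomial Kq) ^ 2 - Polynomial.C (qq * ς * (qint (2 * (j : ℤ) + 1)) ^ 2))
  else
    Polynomial.C (qfact n)⁻¹ *
      (Polynomial.X *
        ∏ j ∈ Finset.range (n / 2),
          ((Polynomial.X : Polynomial Kq) ^ 2 - Polynomial.C (qq * ς * (qint (2 * (j : ℤ) + 1)) ^ 2)))

lemma qq_ne_zero : qq ≠ 0 := RatFunc.X_ne_zero

lemma qq_pow_ne_one {m : ℕ} (hm : m ≠ 0) : qq ^ m ≠ 1 := by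
  intro h
  have h1 : algebraMap (Polynomial ℚ) Kq (Polynomial.X ^ m) = algebraMap (Polynomial ℚ) Kq 1 := by
    rw [map_pow, RatFunc.algebraMap_X, map_one]; exact h
  have h2 := IsFractionRing.injective (Polynomial ℚ) (RatFunc ℚ) h1
  have h3 := congrArg Polynomial.natDegree h2
  simp [Polynomial.natDegree_X_pow] at h3
  exact hm h3

lemma qq_zpow_eq_one_iff {n : ℤ} : qq ^ n = 1 ↔ n = 0 := by
  constructor
  · intro h
    rcases lt_trichotomy n 0 with hn | hn | hn
    · exfalso
      have : qq ^ (-n) = 1 := by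
        rw [zpow_neg, h, inv_one]
      have h2 : qq ^ ((-n).toNat) = 1 := by
        rwa [← zpow_natCast, Int.toNat_of_nonneg (by omega)]
      exact qq_pow_ne_one (by omega) h2
    · exact hn
    · exfalso
      have h2 : qq ^ (n.toNat) = 1 := by
        rwa [← zpow_natCast, Int.toNat_of_nonneg (by omega)]
      exact qq_pow_ne_one (by omega) h2
  · rintro rfl; rfl

lemma qq_zpow_inj {a b : ℤ} (h : qq ^ a = qq ^ b) : a = b := by
  have : qq ^ (a - b) = 1 := by
    rw [zpow_sub₀ qq_ne_zero, h, div_self (zpow_ne_zero _ qq_ne_zero)]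
  have := qq_zpow_eq_one_iff.mp this
  omega

lemma qden_ne_zero : qq - qq⁻¹ ≠ 0 := by
  intro h
  have h2 : qq ^ (2:ℤ) = 1 := by
    have : qq = qq⁻¹ := by linear_combination h
    have h3 : qq * qq = 1 := by
      nth_rewrite 2 [this]
      exact mul_inv_cancel₀ qq_ne_zero
    rw [zpow_two]; exact h3
  have := qq_zpow_eq_one_iff.mp h2
  omega

lemma qint_zero : qint 0 = 0 := by simp [qint]

lemma qint_ne_zero {n : ℤ} (hn : n ≠ 0) : qint n ≠ 0 := by
  rw [qint, div_ne_zero_iff]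
  refine ⟨?_, qden_ne_zero⟩
  intro h
  have : qq ^ n = qq ^ (-n) := by linear_combination h
  have := qq_zpow_inj this
  omega

lemma qfact_ne_zero (n : ℕ) : qfact n ≠ 0 := by
  rw [qfact]
  apply Finset.prod_ne_zero_iff.mpr
  intro i _
  exact qint_ne_zero (by omega)

lemma qfact_succ (n : ℕ) : qfact (n+1) = qfact n * qint ((n:ℤ)+1) := by
  rw [qfact, qfact, Finset.prod_range_succ]

lemma zp (x : ℤ) : qq ^ (2*x) = (qq ^ x)^2 := by
  rw [two_mul, zpow_add₀ qq_ne_zero, sq]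

lemma divhelp (x1 x2 x3 y z1 z2 w1 w2 w3 d : Kq)
    (h : x1*x2*x3 + y*(z1^2-z2^2) = w1*w2*w3) :
    (x1/d)*(x2/d)*(x3/d) + (y/d)*((z1/d)^2-(z2/d)^2) = (w1/d)*(w2/d)*(w3/d) := by
  linear_combination (d⁻¹)^3 * h

set_option maxHeartbeats 4000000 in
lemma qS (K A l : ℤ) :
    qint (2*A-2*l) * qint (2*K-2*l) * qint (2*K+2*A-2*l-2)
      + qint (2*l+2) * ((qint (2*K+2*A-2*l))^2 - (qint (2*A))^2)
    = qint (2*A+2) * qint (2*K+2*A) * qint (2*K-2*l) := by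
  have hq := qq_ne_zero
  have hu : qq ^ A ≠ 0 := zpow_ne_zero _ hq
  have hv : qq ^ K ≠ 0 := zpow_ne_zero _ hq
  have hw : qq ^ l ≠ 0 := zpow_ne_zero _ hq
  have key : (qq^(2*A-2*l) - qq^(-(2*A-2*l))) * (qq^(2*K-2*l) - qq^(-(2*K-2*l)))
        * (qq^(2*K+2*A-2*l-2) - qq^(-(2*K+2*A-2*l-2)))
      + (qq^(2*l+2) - qq^(-(2*l+2)))
        * ((qq^(2*K+2*A-2*l) - qq^(-(2*K+2*A-2*l)))^2 - (qq^(2*A) - qq^(-(2*A)))^2)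
      = (qq^(2*A+2) - qq^(-(2*A+2))) * (qq^(2*K+2*A) - qq^(-(2*K+2*A)))
        * (qq^(2*K-2*l) - qq^(-(2*K-2*l))) := by
    have hrU : qq^(2*A) * qq^(-(2*A)) = 1 := by
      rw [← zpow_add₀ hq]; simp
    have hrV : qq^(2*K) * qq^(-(2*K)) = 1 := by
      rw [← zpow_add₀ hq]; simp
    have hrW : qq^(2*l) * qq^(-(2*l)) = 1 := by
      rw [← zpow_add₀ hq]; simp
    have hrE : qq^(2:ℤ) * qq^(-2:ℤ) = 1 := by
      rw [← zpow_add₀ hq]; simp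
    simp only [sub_eq_add_neg, neg_add, neg_neg, zpow_add₀ hq]
    generalize qq ^ (2*A) = U at hrU ⊢
    generalize qq ^ (-(2*A)) = Ui at hrU ⊢
    generalize qq ^ (2*K) = V at hrV ⊢
    generalize qq ^ (-(2*K)) = Vi at hrV ⊢
    generalize qq ^ (2*l) = W at hrW ⊢
    generalize qq ^ (-(2*l)) = Wi at hrW ⊢
    generalize qq ^ (2:ℤ) = E at hrE ⊢
    generalize qq ^ (-2:ℤ) = Ei at hrE ⊢
    linear_combination ((-2)*Wi*Ei + 2*W*E - Vi^2*W*E + Vi^2*W^2*Wi*E + V*Vi*Wi*E - V*Vi*W*Ei + 2*V*Vi*W*Wi^2*Ei - V*Vi*W*Wi^2*E + V*Vi*W^2*Wi*Ei + (-2)*V*Vi*W^2*Wi*E + V^2*Wi*Ei - V^2*W*Wi^2*Ei) * hrU + (Wi*E - W*Ei + 2*W*Wi^2*Ei - W*Wi^2*E + W^2*Wi*Ei + (-2)*W^2*Wi*E - Ui^2*Wi*Ei + Ui^2*W^2*Wi*E + U^2*W*E - U^2*W*Wi^2*Ei) * hrV + (2*Wi*Ei - Wi*E + W*Ei + (-2)*W*E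 + Vi^2*W*E - V^2*Wi*Ei + Ui^2*W*E - Ui^2*Vi^2*W*Ei - U^2*Wi*Ei + U^2*V^2*Wi*E) * hrW
  simp only [qint]
  exact divhelp _ _ _ _ _ _ _ _ _ _ key

lemma qint_congr {m n : ℤ} (h : m = n) : qint m = qint n := by rw [h]

/-- Coefficients in the expansion. -/
def Dc (ς : Kq) (k a l : ℕ) : Kq :=
  ∏ m ∈ Finset.range l,
    (qq * ς * qint (2*(a:ℤ)-2*(m:ℤ)) * qint (2*(k:ℤ)-2*(m:ℤ))
      * qint (2*(k:ℤ)+2*(a:ℤ)-2*(m:ℤ)-2) / qint (2*(m:ℤ)+2))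

lemma Dc_zero (ς : Kq) (k a : ℕ) : Dc ς k a 0 = 1 := by simp [Dc]

lemma Dc_succ (ς : Kq) (k a l : ℕ) :
    Dc ς k a (l+1) = Dc ς k a l *
      (qq * ς * qint (2*(a:ℤ)-2*(l:ℤ)) * qint (2*(k:ℤ)-2*(l:ℤ))
        * qint (2*(k:ℤ)+2*(a:ℤ)-2*(l:ℤ)-2) / qint (2*(l:ℤ)+2)) :=
  Finset.prod_range_succ _ _

lemma Dc_split (ς : Kq) (n : ℕ) (f g h e : ℕ → Kq) :
    ∏ m ∈ Finset.range n, (qq * ς * f m * g m * h m / e m)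
      = (qq*ς)^n * ((∏ m ∈ Finset.range n, f m) * (∏ m ∈ Finset.range n, g m)
          * (∏ m ∈ Finset.range n, h m)) / ∏ m ∈ Finset.range n, e m := by
  rw [Finset.prod_div_distrib]
  congr 1
  rw [show (fun m => qq * ς * f m * g m * h m) = fun m => (qq*ς) * (f m * g m * h m) from by
    funext m; ring]
  rw [Finset.prod_mul_distrib, Finset.prod_const, Finset.card_range]
  congr 1
  rw [Finset.prod_mul_distrib, Finset.prod_mul_distrib]

lemma Dc_dag (ς : Kq) (k a l : ℕ) :
    Dc ς k (a+1) (l+1) = Dc ς k a l *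
      (qq * ς * qint (2*(a:ℤ)+2) * qint (2*(k:ℤ)+2*(a:ℤ)) * qint (2*(k:ℤ)-2*(l:ℤ))
        / qint (2*(l:ℤ)+2)) := by
  simp only [Dc, Dc_split]
  have pA : ∏ m ∈ Finset.range (l+1), qint (2*((a+1:ℕ):ℤ)-2*(m:ℤ))
      = qint (2*(a:ℤ)+2) * ∏ m ∈ Finset.range l, qint (2*(a:ℤ)-2*(m:ℤ)) := by
    rw [Finset.prod_range_succ', mul_comm]
    refine congrArg₂ (· * ·) (qint_congr (by push_cast; try ring))
      (Finset.prod_congr rfl fun m _ => qint_congr (by push_cast; try ring))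
  have pB : ∏ m ∈ Finset.range (l+1), qint (2*(k:ℤ)-2*(m:ℤ))
      = (∏ m ∈ Finset.range l, qint (2*(k:ℤ)-2*(m:ℤ))) * qint (2*(k:ℤ)-2*(l:ℤ)) :=
    Finset.prod_range_succ _ _
  have pC : ∏ m ∈ Finset.range (l+1), qint (2*(k:ℤ)+2*((a+1:ℕ):ℤ)-2*(m:ℤ)-2)
      = qint (2*(k:ℤ)+2*(a:ℤ)) * ∏ m ∈ Finset.range l, qint (2*(k:ℤ)+2*(a:ℤ)-2*(m:ℤ)-2) := by
    rw [Finset.prod_range_succ', mul_comm]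
    refine congrArg₂ (· * ·) (qint_congr (by push_cast; try ring))
      (Finset.prod_congr rfl fun m _ => qint_congr (by push_cast; try ring))
  have pD : ∏ m ∈ Finset.range (l+1), qint (2*(m:ℤ)+2)
      = (∏ m ∈ Finset.range l, qint (2*(m:ℤ)+2)) * qint (2*(l:ℤ)+2) :=
    Finset.prod_range_succ _ _
  rw [pA, pB, pC, pD]
  ring

lemma Dc_rec (ς : Kq) (k a l : ℕ) :
    Dc ς (k+1) (a+2) (l+1) = Dc ς (k+1) (a+1) (l+1)
      + qq * ς * ((qint (2*((k:ℤ)+1)+2*((a:ℤ)+1)-2*(l:ℤ)))^2 - (qint (2*((a:ℤ)+1)))^2)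
        * Dc ς (k+1) (a+1) l := by
  have S := qS ((k:ℤ)+1) ((a:ℤ)+1) (l:ℤ)
  have hc : qint (2*(l:ℤ)+2) * (qint (2*(l:ℤ)+2))⁻¹ = 1 :=
    mul_inv_cancel₀ (qint_ne_zero (by omega))
  rw [show a+2 = a+1+1 from rfl, Dc_dag, Dc_succ]
  push_cast
  linear_combination (-(Dc ς (k+1) (a+1) l * qq * ς * (qint (2*(l:ℤ)+2))⁻¹)) * S
    + (qq * ς * ((qint (2*((k:ℤ)+1)+2*((a:ℤ)+1)-2*(l:ℤ)))^2 - (qint (2*((a:ℤ)+1)))^2)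
        * Dc ς (k+1) (a+1) l) * hc

/-- The basic factors product. -/
def Ep (ς : Kq) (n : ℕ) : Polynomial Kq :=
  ∏ j ∈ Finset.range n,
    ((Polynomial.X : Polynomial Kq) ^ 2 - Polynomial.C (qq * ς * (qint (2 * (j : ℤ) + 2)) ^ 2))

lemma Ep_succ (ς : Kq) (n : ℕ) :
    Ep ς (n+1) = Ep ς n *
      ((Polynomial.X : Polynomial Kq) ^ 2 - Polynomial.C (qq * ς * (qint (2 * (n : ℤ) + 2)) ^ 2)) :=
  Finset.prod_range_succ _ _

lemma mainP (ς : Kq) (k a : ℕ) :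
    (Polynomial.X : Polynomial Kq) ^ 2 * (Ep ς k * Ep ς a)
      = ∑ l ∈ Finset.range (k+2), Polynomial.C (Dc ς (k+1) (a+1) l) * Ep ς (k+a+1-l) := by
  induction a with
  | zero =>
      simp only [Nat.add_zero, Nat.zero_add]
      rw [Finset.sum_range_succ', Finset.sum_range_succ']
      have hz : ∑ l ∈ Finset.range k,
          Polynomial.C (Dc ς (k+1) 1 (l+1+1)) * Ep ς (k+1-(l+1+1)) = 0 := by
        apply Finset.sum_eq_zero
        intro l _
        have : Dc ς (k+1) 1 (l+1+1) = 0 := by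
          rw [Dc]
          apply Finset.prod_eq_zero (Finset.mem_range.mpr (show 1 < l+1+1 by omega))
          simp only [show ((2:ℤ)*((1:ℕ):ℤ)-2*((1:ℕ):ℤ)) = 0 from by norm_num, qint_zero,
            mul_zero, zero_mul, zero_div]
        rw [this]; simp
      have h1 : Dc ς (k+1) 1 1 = qq*ς*(qint (2*(k:ℤ)+2))^2 := by
        rw [show (1:ℕ) = 0+1 from rfl, Dc_succ, Dc_zero, one_mul]
        rw [qint_congr (show (2*((0+1:ℕ):ℤ)-2*((0:ℕ):ℤ)) = 2*((0:ℕ):ℤ)+2 from by push_cast; try ring),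
          qint_congr (show (2*((k+1:ℕ):ℤ)-2*((0:ℕ):ℤ)) = 2*(k:ℤ)+2 from by push_cast; try ring),
          qint_congr (show (2*((k+1:ℕ):ℤ)+2*((0+1:ℕ):ℤ)-2*((0:ℕ):ℤ)-2) = 2*(k:ℤ)+2 from by
            push_cast; try ring)]
        have h2 : qint (2:ℤ) ≠ 0 := qint_ne_zero (by norm_num)
        have h2b : qint (2*((0:ℕ):ℤ)+2) = qint (2:ℤ) := qint_congr (by push_cast; try ring)
        rw [h2b]
        field_simp
      rw [hz, zero_add, show (0:ℕ)+1 = 1 from rfl, show k+1-1 = k from by omega,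
        show k+1-0 = k+1 from by omega, h1, Dc_zero, Ep_succ,
        show Ep ς 0 = 1 from Finset.prod_range_zero _, map_one]
      ring
  | succ a ih =>
      have expand : (Polynomial.X : Polynomial Kq)^2 * (Ep ς k * Ep ς (a+1))
          = ((Polynomial.X : Polynomial Kq)^2 * (Ep ς k * Ep ς a)) *
            ((Polynomial.X : Polynomial Kq)^2 - Polynomial.C (qq*ς*(qint (2*(a:ℤ)+2))^2)) := by
        rw [Ep_succ]; ring
      rw [expand, ih, Finset.sum_mul]
      have term : ∀ l ∈ Finset.range (k+2),
          Polynomial.C (Dc ς (k+1) (a+1) l) * Ep ς (k+a+1-l) *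
              ((Polynomial.X : Polynomial Kq)^2 - Polynomial.C (qq*ς*(qint (2*(a:ℤ)+2))^2))
            = Polynomial.C (Dc ς (k+1) (a+1) l) * Ep ς (k+a+2-l)
              + Polynomial.C (Dc ς (k+1) (a+1) l *
                  (qq*ς*((qint (2*((k:ℤ)+1)+2*((a:ℤ)+1)-2*(l:ℤ)))^2 - (qint (2*(a:ℤ)+2))^2)))
                * Ep ς (k+a+1-l) := by
        intro l hl
        have hl' : l < k+2 := Finset.mem_range.mp hl
        have hE : Ep ς (k+a+2-l) = Ep ς (k+a+1-l) *
            ((Polynomial.X : Polynomial Kq)^2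
              - Polynomial.C (qq*ς*(qint (2*((k+a+1-l:ℕ):ℤ)+2))^2)) := by
          rw [show k+a+2-l = (k+a+1-l)+1 from by omega]; exact Ep_succ ς _
        rw [hE, qint_congr (show (2*((k+a+1-l:ℕ):ℤ)+2) = 2*((k:ℤ)+1)+2*((a:ℤ)+1)-2*(l:ℤ) from by
          rw [Nat.cast_sub (show l ≤ k+a+1 by omega)]; push_cast; try ring)]
        simp only [map_mul, map_sub, map_pow]
        ring
      rw [Finset.sum_congr rfl term, Finset.sum_add_distrib]
      have e2 : ∑ l ∈ Finset.range (k+2),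
          Polynomial.C (Dc ς (k+1) (a+1) l *
              (qq*ς*((qint (2*((k:ℤ)+1)+2*((a:ℤ)+1)-2*(l:ℤ)))^2 - (qint (2*(a:ℤ)+2))^2)))
            * Ep ς (k+a+1-l)
          = ∑ l ∈ Finset.range (k+1),
          Polynomial.C (Dc ς (k+1) (a+1) l *
              (qq*ς*((qint (2*((k:ℤ)+1)+2*((a:ℤ)+1)-2*(l:ℤ)))^2 - (qint (2*(a:ℤ)+2))^2)))
            * Ep ς (k+a+1-l) := by
        rw [Finset.sum_range_succ,
          qint_congr (show (2*((k:ℤ)+1)+2*((a:ℤ)+1)-2*((k+1:ℕ):ℤ)) = 2*(a:ℤ)+2 from by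
            push_cast; try ring)]
        simp
      have e3 : ∀ l ∈ Finset.range (k+1),
          Polynomial.C (Dc ς (k+1) (a+1) l *
              (qq*ς*((qint (2*((k:ℤ)+1)+2*((a:ℤ)+1)-2*(l:ℤ)))^2 - (qint (2*(a:ℤ)+2))^2)))
            * Ep ς (k+a+1-l)
          = (Polynomial.C (Dc ς (k+1) (a+1+1) (l+1)) - Polynomial.C (Dc ς (k+1) (a+1) (l+1)))
            * Ep ς (k+a+2-(l+1)) := by
        intro l hl
        rw [show k+a+2-(l+1) = k+a+1-l from by omega]
        congr 1
        rw [show a+1+1 = a+2 from rfl, Dc_rec,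
          qint_congr (show (2*((a:ℤ))+2) = 2*((a:ℤ)+1) from by ring)]
        simp only [map_add, map_mul, map_sub, map_pow]
        ring
      have e1 : ∑ l ∈ Finset.range (k+2),
          (Polynomial.C (Dc ς (k+1) (a+1+1) l) - Polynomial.C (Dc ς (k+1) (a+1) l))
            * Ep ς (k+a+2-l)
          = ∑ l ∈ Finset.range (k+1),
          (Polynomial.C (Dc ς (k+1) (a+1+1) (l+1)) - Polynomial.C (Dc ς (k+1) (a+1) (l+1)))
            * Ep ς (k+a+2-(l+1)) := by
        rw [Finset.sum_range_succ']
        simp [Dc_zero]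
      rw [e2, Finset.sum_congr rfl e3, ← e1]
      rw [← Finset.sum_add_distrib]
      refine Finset.sum_congr rfl fun l _ => ?_
      have harg : k+(a+1)+1-l = k+a+2-l := by omega
      rw [harg]
      ring

lemma BevP_odd (ς : Kq) (n : ℕ) :
    BevP ς (2*n+1) = Polynomial.C (qfact (2*n+1))⁻¹ * (Polynomial.X * Ep ς n) := by
  rw [BevP, if_neg (by rw [Nat.even_iff]; omega), show (2*n+1)/2 = n from by omega]
  rfl

lemma BevP_even (ς : Kq) (n : ℕ) :
    BevP ς (2*(n+1)) = Polynomial.C (qfact (2*(n+1)))⁻¹ * (Polynomial.X^2 * Ep ς n) := by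
  rw [BevP, if_pos (even_two_mul _), show (2*(n+1))/2 = n+1 from by omega]
  congr 1
  rw [Finset.prod_range_succ']
  have h0 : qint (2*((0:ℕ):ℤ)) = 0 := by
    rw [qint_congr (show (2*((0:ℕ):ℤ)) = 0 from by push_cast; try ring)]; exact qint_zero
  rw [h0]
  have hrest : ∀ j ∈ Finset.range n,
      ((Polynomial.X : Polynomial Kq) ^ 2 - Polynomial.C (qq * ς * (qint (2*((j+1:ℕ):ℤ)))^2))
      = ((Polynomial.X : Polynomial Kq) ^ 2 - Polynomial.C (qq * ς * (qint (2*(j:ℤ)+2))^2)) := by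
    intro j _
    rw [qint_congr (show (2*((j+1:ℕ):ℤ)) = 2*(j:ℤ)+2 from by push_cast; try ring)]
  rw [Finset.prod_congr rfl hrest]
  simp [Ep, mul_comm]

lemma qfact_add_two_mul (n l : ℕ) :
    qfact (n + 2*l) = qfact n *
      ∏ m ∈ Finset.range l, (qint ((n:ℤ)+2*(m:ℤ)+1) * qint ((n:ℤ)+2*(m:ℤ)+2)) := by
  induction l with
  | zero => simp
  | succ l ih =>
      rw [show n+2*(l+1) = (n+2*l)+1+1 from by ring, qfact_succ, qfact_succ, ih,
        Finset.prod_range_succ,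
        qint_congr (show ((n+2*l:ℕ):ℤ)+1 = (n:ℤ)+2*(l:ℤ)+1 from by push_cast; try ring),
        qint_congr (show ((n+2*l+1:ℕ):ℤ)+1 = (n:ℤ)+2*(l:ℤ)+2 from by push_cast; try ring)]
      ring

lemma fact_ratio (s l : ℕ) :
    qfact (2*(s+l)+1) = qfact (2*s+1) *
      ∏ m ∈ Finset.range l,
        (qint (2*(s:ℤ)+2*(l:ℤ)-2*(m:ℤ)) * qint (2*(s:ℤ)+2*(l:ℤ)-2*(m:ℤ)+1)) := by
  rw [show 2*(s+l)+1 = (2*s+1) + 2*l from by ring, qfact_add_two_mul]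
  congr 1
  rw [← Finset.prod_range_reflect]
  refine Finset.prod_congr rfl fun m hm => ?_
  have hm' : m < l := Finset.mem_range.mp hm
  rw [qint_congr (show ((2*s+1:ℕ):ℤ)+2*((l-1-m:ℕ):ℤ)+1 = 2*(s:ℤ)+2*(l:ℤ)-2*(m:ℤ) from by omega),
    qint_congr (show ((2*s+1:ℕ):ℤ)+2*((l-1-m:ℕ):ℤ)+2 = 2*(s:ℤ)+2*(l:ℤ)-2*(m:ℤ)+1 from by omega)]

lemma prod_Icc_one (f : ℕ → Kq) (l : ℕ) :
    ∏ m ∈ Finset.Icc 1 l, f m = ∏ m ∈ Finset.range l, f (m+1) := by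
  induction l with
  | zero => simp
  | succ l ih =>
      rw [Finset.prod_Icc_succ_top (by omega), ih, Finset.prod_range_succ]

lemma bridge (ς : Kq) (K A l : ℕ) :
    Dc ς (K+1) (A+1) l
      = (∏ m ∈ Finset.Icc 1 l,
          (qint (2*((A:ℤ)+1) - 2*(m:ℤ) + 2) * qint (2*((K:ℤ)+1) - 2*(m:ℤ) + 2)) /
            (qint (2*((K:ℤ)+1) + 2*((A:ℤ)+1) - 2*(m:ℤ) + 1) * qint (2*(m:ℤ))))
        * (qq * ς) ^ l
        * ∏ m ∈ Finset.range l,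
            (qint (2*(K:ℤ)+2*(A:ℤ)-2*(m:ℤ)+2) * qint (2*(K:ℤ)+2*(A:ℤ)-2*(m:ℤ)+3)) := by
  rw [prod_Icc_one]
  rw [show ((qq*ς)^l : Kq) = ∏ _m ∈ Finset.range l, (qq*ς) from by
    rw [Finset.prod_const, Finset.card_range]]
  rw [← Finset.prod_mul_distrib, ← Finset.prod_mul_distrib]
  rw [Dc]
  refine Finset.prod_congr rfl fun m hm => ?_
  have h3 : qint (2*(K:ℤ)+2*(A:ℤ)-2*(m:ℤ)+3) ≠ 0 := qint_ne_zero (by omega)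
  have h4 : qint (2*(m:ℤ)+2) ≠ 0 := qint_ne_zero (by omega)
  rw [qint_congr (show 2*((A+1:ℕ):ℤ)-2*(m:ℤ) = 2*((A:ℤ)+1)-2*((m+1:ℕ):ℤ)+2 from by
      push_cast; try ring),
    qint_congr (show 2*((K+1:ℕ):ℤ)-2*(m:ℤ) = 2*((K:ℤ)+1)-2*((m+1:ℕ):ℤ)+2 from by
      push_cast; try ring),
    qint_congr (show 2*((K+1:ℕ):ℤ)+2*((A+1:ℕ):ℤ)-2*(m:ℤ)-2 = 2*(K:ℤ)+2*(A:ℤ)-2*(m:ℤ)+2 from by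
      push_cast; try ring),
    qint_congr (show 2*((K:ℤ)+1)+2*((A:ℤ)+1)-2*((m+1:ℕ):ℤ)+1 = 2*(K:ℤ)+2*(A:ℤ)-2*(m:ℤ)+3 from by
      push_cast; try ring),
    qint_congr (show 2*((m+1:ℕ):ℤ) = 2*(m:ℤ)+2 from by push_cast; try ring)]
  field_simp

lemma sum_Icc_one {M : Type*} [AddCommMonoid M] (f : ℕ → M) (l : ℕ) :
    ∑ m ∈ Finset.Icc 1 l, f m = ∑ m ∈ Finset.range l, f (m+1) := by
  induction l with
  | zero => simp
  | succ l ih =>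
      rw [Finset.sum_Icc_succ_top (by omega), ih, Finset.sum_range_succ]

set_option maxHeartbeats 1000000 in
lemma coeff_id (ς : Kq) (K A l : ℕ) (hl : l ≤ K+1) :
    qbinom (2*(K+A+1)+1) (2*K+1) *
        ((∏ m ∈ Finset.Icc 1 l,
          (qint (2*((A+1:ℕ):ℤ) - 2*(m:ℤ) + 2) * qint (2*((K+1:ℕ):ℤ) - 2*(m:ℤ) + 2)) /
            (qint (2*((K+1:ℕ):ℤ) + 2*((A+1:ℕ):ℤ) - 2*(m:ℤ) + 1) * qint (2*(m:ℤ)))) * (qq*ς)^l)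
        * (qfact (2*(K+A+1-l)+1))⁻¹
      = (qfact (2*K+1))⁻¹ * (qfact (2*(A+1)))⁻¹ * Dc ς (K+1) (A+1) l := by
  have hconv : (∏ m ∈ Finset.Icc 1 l,
          (qint (2*((A+1:ℕ):ℤ) - 2*(m:ℤ) + 2) * qint (2*((K+1:ℕ):ℤ) - 2*(m:ℤ) + 2)) /
            (qint (2*((K+1:ℕ):ℤ) + 2*((A+1:ℕ):ℤ) - 2*(m:ℤ) + 1) * qint (2*(m:ℤ))))
      = ∏ m ∈ Finset.Icc 1 l,
          (qint (2*((A:ℤ)+1) - 2*(m:ℤ) + 2) * qint (2*((K:ℤ)+1) - 2*(m:ℤ) + 2)) /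
            (qint (2*((K:ℤ)+1) + 2*((A:ℤ)+1) - 2*(m:ℤ) + 1) * qint (2*(m:ℤ))) := by
    refine Finset.prod_congr rfl fun m _ => ?_
    rw [qint_congr (show 2*((A+1:ℕ):ℤ) - 2*(m:ℤ) + 2 = 2*((A:ℤ)+1) - 2*(m:ℤ) + 2 from by
        push_cast; try ring),
      qint_congr (show 2*((K+1:ℕ):ℤ) - 2*(m:ℤ) + 2 = 2*((K:ℤ)+1) - 2*(m:ℤ) + 2 from by
        push_cast; try ring),
      qint_congr (show 2*((K+1:ℕ):ℤ) + 2*((A+1:ℕ):ℤ) - 2*(m:ℤ) + 1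
          = 2*((K:ℤ)+1) + 2*((A:ℤ)+1) - 2*(m:ℤ) + 1 from by push_cast; try ring)]
  rw [hconv]
  have hratio : qfact (2*(K+A+1)+1)
      = qfact (2*(K+A+1-l)+1) * ∏ m ∈ Finset.range l,
          (qint (2*(K:ℤ)+2*(A:ℤ)-2*(m:ℤ)+2) * qint (2*(K:ℤ)+2*(A:ℤ)-2*(m:ℤ)+3)) := by
    have h := fact_ratio (K+A+1-l) l
    rw [show K+A+1-l+l = K+A+1 from by omega] at h
    rw [h]
    congr 1
    refine Finset.prod_congr rfl fun m hm => ?_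
    rw [qint_congr (show 2*((K+A+1-l:ℕ):ℤ)+2*(l:ℤ)-2*(m:ℤ)
          = 2*(K:ℤ)+2*(A:ℤ)-2*(m:ℤ)+2 from by omega),
      qint_congr (show 2*((K+A+1-l:ℕ):ℤ)+2*(l:ℤ)-2*(m:ℤ)+1
          = 2*(K:ℤ)+2*(A:ℤ)-2*(m:ℤ)+3 from by omega)]
  rw [bridge, qbinom, show 2*(K+A+1)+1 - (2*K+1) = 2*(A+1) from by omega, hratio]
  have n1 : qfact (2*K+1) ≠ 0 := qfact_ne_zero _
  have n2 : qfact (2*(A+1)) ≠ 0 := qfact_ne_zero _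
  have n3 : qfact (2*(K+A+1-l)+1) ≠ 0 := qfact_ne_zero _
  generalize (∏ m ∈ Finset.Icc 1 l,
      (qint (2*((A:ℤ)+1) - 2*(m:ℤ) + 2) * qint (2*((K:ℤ)+1) - 2*(m:ℤ) + 2)) /
        (qint (2*((K:ℤ)+1) + 2*((A:ℤ)+1) - 2*(m:ℤ) + 1) * qint (2*(m:ℤ)))) = P
  generalize (∏ m ∈ Finset.range l,
      (qint (2*(K:ℤ)+2*(A:ℤ)-2*(m:ℤ)+2) * qint (2*(K:ℤ)+2*(A:ℤ)-2*(m:ℤ)+3))) = R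
  generalize hF1 : qfact (2*K+1) = F1 at n1
  generalize hF2 : qfact (2*(A+1)) = F2 at n2
  generalize hF3 : qfact (2*(K+A+1-l)+1) = F3 at n3
  field_simp


set_option maxHeartbeats 1000000 in
/-- Multiplication formula `B_ev^{(2k-1)} B_ev^{(2a)}`. -/
theorem Bev_mul_odd_even (ς : Kq) (hς : ς ≠ 0) (k a : ℕ) (hk : 1 ≤ k) (ha : 1 ≤ a) :
    BevP ς (2 * k - 1) * BevP ς (2 * a) =
    Polynomial.C (qbinom (2 * k + 2 * a - 1) (2 * k - 1)) *
      (BevP ς (2 * k + 2 * a - 1) +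
        ∑ ℓ ∈ Finset.Icc 1 k,
          Polynomial.C ((∏ m ∈ Finset.Icc 1 ℓ,
              (qint (2 * (a : ℤ) - 2 * (m : ℤ) + 2) * qint (2 * (k : ℤ) - 2 * (m : ℤ) + 2)) /
                (qint (2 * (k : ℤ) + 2 * (a : ℤ) - 2 * (m : ℤ) + 1) * qint (2 * (m : ℤ)))) *
            (qq * ς) ^ ℓ) *
          BevP ς (2 * k + 2 * a - 2 * ℓ - 1)) := by
  obtain ⟨K, rfl⟩ : ∃ K, k = K+1 := ⟨k-1, by omega⟩
  obtain ⟨A, rfl⟩ : ∃ A, a = A+1 := ⟨a-1, by omega⟩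
  rw [show 2*(K+1)-1 = 2*K+1 from by omega,
    show 2*(K+1)+2*(A+1)-1 = 2*(K+A+1)+1 from by omega]
  have hterm : ∀ ℓ ∈ Finset.Icc 1 (K+1),
      Polynomial.C ((∏ m ∈ Finset.Icc 1 ℓ,
          (qint (2*((A+1:ℕ):ℤ) - 2*(m:ℤ) + 2) * qint (2*((K+1:ℕ):ℤ) - 2*(m:ℤ) + 2)) /
            (qint (2*((K+1:ℕ):ℤ) + 2*((A+1:ℕ):ℤ) - 2*(m:ℤ) + 1) * qint (2*(m:ℤ)))) * (qq*ς)^ℓ) *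
          BevP ς (2*(K+1)+2*(A+1)-2*ℓ-1)
        = Polynomial.C ((∏ m ∈ Finset.Icc 1 ℓ,
          (qint (2*((A+1:ℕ):ℤ) - 2*(m:ℤ) + 2) * qint (2*((K+1:ℕ):ℤ) - 2*(m:ℤ) + 2)) /
            (qint (2*((K+1:ℕ):ℤ) + 2*((A+1:ℕ):ℤ) - 2*(m:ℤ) + 1) * qint (2*(m:ℤ)))) * (qq*ς)^ℓ) *
          (Polynomial.C (qfact (2*(K+A+1-ℓ)+1))⁻¹ * (Polynomial.X * Ep ς (K+A+1-ℓ))) := by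
    intro ℓ hℓ
    have hℓ' : ℓ ≤ K+1 := (Finset.mem_Icc.mp hℓ).2
    rw [show 2*(K+1)+2*(A+1)-2*ℓ-1 = 2*(K+A+1-ℓ)+1 from by omega, BevP_odd]
  rw [Finset.sum_congr rfl hterm, sum_Icc_one, BevP_odd, BevP_even, BevP_odd]
  rw [show Polynomial.C (qfact (2*K+1))⁻¹ * (Polynomial.X * Ep ς K) *
        (Polynomial.C (qfact (2*(A+1)))⁻¹ * (Polynomial.X^2 * Ep ς A))
      = Polynomial.C (qfact (2*K+1))⁻¹ * Polynomial.C (qfact (2*(A+1)))⁻¹ *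
        (Polynomial.X * (Polynomial.X^2 * (Ep ς K * Ep ς A))) from by ring,
    mainP, Finset.mul_sum, Finset.mul_sum]
  rw [Finset.sum_range_succ']
  conv_rhs => rw [mul_add, add_comm, Finset.mul_sum]
  congr 1
  · refine Finset.sum_congr rfl fun l hl => ?_
    have hl' : l+1 ≤ K+1 := by
      have := Finset.mem_range.mp hl; omega
    have hc := coeff_id ς K A (l+1) hl'
    calc Polynomial.C (qfact (2*K+1))⁻¹ * Polynomial.C (qfact (2*(A+1)))⁻¹ *
          (Polynomial.X * (Polynomial.C (Dc ς (K+1) (A+1) (l+1)) * Ep ς (K+A+1-(l+1))))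
        = Polynomial.C ((qfact (2*K+1))⁻¹ * (qfact (2*(A+1)))⁻¹ * Dc ς (K+1) (A+1) (l+1)) *
            (Polynomial.X * Ep ς (K+A+1-(l+1))) := by
          simp only [map_mul]; ring
      _ = Polynomial.C (qbinom (2*(K+A+1)+1) (2*K+1) *
            ((∏ m ∈ Finset.Icc 1 (l+1),
              (qint (2*((A+1:ℕ):ℤ) - 2*(m:ℤ) + 2) * qint (2*((K+1:ℕ):ℤ) - 2*(m:ℤ) + 2)) /
                (qint (2*((K+1:ℕ):ℤ) + 2*((A+1:ℕ):ℤ) - 2*(m:ℤ) + 1) * qint (2*(m:ℤ))))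
              * (qq*ς)^(l+1))
            * (qfact (2*(K+A+1-(l+1))+1))⁻¹) * (Polynomial.X * Ep ς (K+A+1-(l+1))) := by
          rw [hc]
      _ = Polynomial.C (qbinom (2*(K+A+1)+1) (2*K+1)) *
            (Polynomial.C ((∏ m ∈ Finset.Icc 1 (l+1),
              (qint (2*((A+1:ℕ):ℤ) - 2*(m:ℤ) + 2) * qint (2*((K+1:ℕ):ℤ) - 2*(m:ℤ) + 2)) /
                (qint (2*((K+1:ℕ):ℤ) + 2*((A+1:ℕ):ℤ) - 2*(m:ℤ) + 1) * qint (2*(m:ℤ))))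
              * (qq*ς)^(l+1)) *
              (Polynomial.C (qfact (2*(K+A+1-(l+1))+1))⁻¹ *
                (Polynomial.X * Ep ς (K+A+1-(l+1))))) := by
          simp only [map_mul]; ring
  · have hc := coeff_id ς K A 0 (by omega)
    rw [Finset.Icc_eq_empty (by omega)] at hc
    simp only [Finset.prod_empty, pow_zero, one_mul, mul_one, Nat.sub_zero, Dc_zero] at hc
    calc Polynomial.C (qfact (2*K+1))⁻¹ * Polynomial.C (qfact (2*(A+1)))⁻¹ *
          (Polynomial.X * (Polynomial.C (Dc ς (K+1) (A+1) 0) * Ep ς (K+A+1-0)))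
        = Polynomial.C ((qfact (2*K+1))⁻¹ * (qfact (2*(A+1)))⁻¹) *
            (Polynomial.X * Ep ς (K+A+1)) := by
          rw [Dc_zero, Nat.sub_zero]; simp only [map_mul, map_one]; ring
      _ = Polynomial.C (qbinom (2*(K+A+1)+1) (2*K+1)) *
          (Polynomial.C (qfact (2*(K+A+1)+1))⁻¹ * (Polynomial.X * Ep ς (K+A+1))) := by
          rw [← hc]
          simp only [map_mul]
          ring
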